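/- With P' constructed as above from T ⪯ P in type B or C, one has L_{P,T} = L_{P',T}; consequently the varieties Z_{P,T} and Z_{P',T} are defined by the same linear and quadratic equations, so Z_{P,T} = Z_{P',T}. -/

import Mathlib

open scoped Classical

/-- `p : ℕ → ℕ` encodes a Schubert symbol `{p 1 < … < p m} ⊆ [1,N]`
with the conventions `p 0 = 0` and `p (m+1) = N+1`, and the isotropic
condition that no two elements sum to `N+1`. -/
structure IsSSym (N m : ℕ) (p : ℕ → ℕ) : Prop where
  zero : p 0 = 0
  top : p (m+1) = N+1
  mono : ∀ i j, i < j → j ≤ m+1 → p i < p j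
  ub : ∀ i, 1 ≤ i → i ≤ m → p i ≤ N
  iso : ∀ i j, 1 ≤ i → i ≤ m → 1 ≤ j → j ≤ m → p i + p j ≠ N+1

/-- The underlying set `{p 1, …, p m}` of a Schubert symbol. -/
def symSet (m : ℕ) (p : ℕ → ℕ) : Finset ℕ := (Finset.Icc 1 m).image p

/-- Componentwise order `t_i ≤ p_i` on Schubert symbols. -/
def leS (m : ℕ) (t p : ℕ → ℕ) : Prop := ∀ i, 1 ≤ i → i ≤ m → t i ≤ p i

/-- `c` is a visible cut of the Richardson diagram `D(P,T)`:
`p_i ≤ c < t_{i+1}` for some `0 ≤ i ≤ m`. -/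
def visCut (m : ℕ) (p t : ℕ → ℕ) (c : ℕ) : Prop :=
  ∃ i, i ≤ m ∧ p i ≤ c ∧ c < t (i+1)

/-- `c` is an apparent cut of `D(P,T)`: `c` or `N−c` is a visible cut. -/
def appCut (N m : ℕ) (p t : ℕ → ℕ) (c : ℕ) : Prop :=
  visCut m p t c ∨ visCut m p t (N - c)

/-- `c` is a zero column of `D(P,T)`: `p_j < c < t_{j+1}` for some `j`. -/
def zeroCol (m : ℕ) (p t : ℕ → ℕ) (c : ℕ) : Prop :=
  ∃ j, j ≤ m ∧ p j < c ∧ c < t (j+1)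

/-- `(j,c)` is a lone star of `D(P,T)` with respect to the cut predicate `cut`. -/
def loneStar (m : ℕ) (p t : ℕ → ℕ) (cut : ℕ → Prop) (j c : ℕ) : Prop :=
  1 ≤ j ∧ j ≤ m ∧ t j ≤ c ∧ c ≤ p j ∧
    ((c = t j ∧ cut c) ∨ (c = p j ∧ cut (c-1)))

/-- `c ∈ 𝓛_{P,T}` : `c` is a zero column, or column `N+1−c` contains a lone star. -/
def LSet (N m : ℕ) (p t : ℕ → ℕ) (cut : ℕ → Prop) (c : ℕ) : Prop :=
  1 ≤ c ∧ c ≤ N ∧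
    (zeroCol m p t c ∨ ∃ j, loneStar m p t cut j (N+1-c))

/-- `[P] = P ∪ {N+1−p : p ∈ P}`. -/
def brP (N : ℕ) (P : Finset ℕ) : Finset ℕ := P ∪ P.image (fun p => N+1-p)

/-- The type-`D` type function `t(P) ∈ {0,1,2}`: if `n+1 ∈ [P]` it is the parity of
`#([1,n+1] \ P)`; otherwise it is `2`. -/
def tD (n : ℕ) (P : Finset ℕ) : ℕ :=
  if (n+1) ∈ P ∨ (n+2) ∈ P then (Finset.Icc 1 (n+1) \ P).card % 2 else 2

/-- The type-`D` Bruhat order `T ⪯ P` on Schubert symbols for `OG(m, 2n+2)`. -/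
def bruhatD (n m : ℕ) (t p : ℕ → ℕ) : Prop :=
  leS m t p ∧ ∀ c, 1 ≤ c → c ≤ n →
    Finset.Icc (c+1) (n+1) ⊆ brP (2*n+2) (symSet m p) →
    Finset.Icc (c+1) (n+1) ⊆ brP (2*n+2) (symSet m t) →
    ((symSet m p) ∩ Finset.Icc 1 c).card = ((symSet m t) ∩ Finset.Icc 1 c).card →
    tD n (symSet m p) = tD n (symSet m t)

/-- The exceptional center cut `n+1` exists in `D(P,T)`:
`p_i = n+2 ≤ t_{i+1}` or `t_i = n+1 ≥ p_{i−1}` for some `i`. -/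
def centerCut (n m : ℕ) (p t : ℕ → ℕ) : Prop :=
  ∃ i, 1 ≤ i ∧ i ≤ m ∧
    ((p i = n+2 ∧ n+2 ≤ t (i+1)) ∨ (t i = n+1 ∧ p (i-1) ≤ n+1))

/-- `c ∈ [1,n]` is a cut candidate of `D(P,T)`:
`[c+1,n+1] ⊆ [P] ∩ [T]` and `#(T ∩ [1,c]) = #(P ∩ [1,c]) + 1`. -/
def cutCandidate (n m : ℕ) (p t : ℕ → ℕ) (c : ℕ) : Prop :=
  1 ≤ c ∧ c ≤ n ∧
  Finset.Icc (c+1) (n+1) ⊆ brP (2*n+2) (symSet m p) ∧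
  Finset.Icc (c+1) (n+1) ⊆ brP (2*n+2) (symSet m t) ∧
  ((symSet m t) ∩ Finset.Icc 1 c).card = ((symSet m p) ∩ Finset.Icc 1 c).card + 1

/-- Exceptional cuts of `D(P,T)` in type `D`. -/
def excCut (n m : ℕ) (p t : ℕ → ℕ) (c : ℕ) : Prop :=
  (centerCut n m p t ∧ c = n+1) ∨
  (tD n (symSet m t) ≠ tD n (symSet m p) ∧
    ∃ d, cutCandidate n m p t d ∧ (c = d ∨ c = 2*n+2 - d))

/-- The type-`D` cut set: apparent cuts together with exceptional cuts. -/
def cutD (n m : ℕ) (p t : ℕ → ℕ) (c : ℕ) : Prop :=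
  appCut (2*n+2) m p t c ∨ excCut n m p t c

/-- The construction of the Schubert symbol `P'` from `T ⪯ P` in types `B` and `C`. -/
noncomputable def Pp (N m : ℕ) (p t : ℕ → ℕ) (i : ℕ) : ℕ :=
  if p i < t (i+1) then p i
  else if ¬ appCut N m p t (t (i+1) - 1) then t (i+1)
  else ((Finset.Icc (t i) (t (i+1) - 1)).filter
        (fun c => ¬ LSet N m p t (appCut N m p t) c)).sup id

/-- The modified construction of the Schubert symbol `P̃` from `T ⪯ P` in type `D`. -/
noncomputable def Ptil (n m : ℕ) (p t : ℕ → ℕ) (i : ℕ) : ℕ :=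
  if p i < t (i+1) then p i
  else if ¬ cutD n m p t (t (i+1) - 1) then
    (if t (i+1) = n+1 ∨ t (i+1) = n+2 then 2*n+3 - t (i+1) else t (i+1))
  else ((Finset.Icc (t i) (t (i+1) - 1)).filter
        (fun c => ¬ LSet (2*n+2) m p t (cutD n m p t) c)).sup id

/-- A critical window `[c+1, N−c]` in `D(P,T)` (type `D`, defined when `t(T) ≠ t(P)`):
`c` and `N−c` are visible cuts and `[c+1,n+1] ⊆ [T] ∩ [P]`. -/
def critWindow (n m : ℕ) (p t : ℕ → ℕ) (c : ℕ) : Prop :=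
  c ≤ n ∧ tD n (symSet m t) ≠ tD n (symSet m p) ∧
  visCut m p t c ∧ visCut m p t (2*n+2 - c) ∧
  Finset.Icc (c+1) (n+1) ⊆ brP (2*n+2) (symSet m t) ∧
  Finset.Icc (c+1) (n+1) ⊆ brP (2*n+2) (symSet m p)

/-- The quadratic form `f_c = x_1 x_N + … + x_c x_{N+1−c}`. -/
noncomputable def fquad (N : ℕ) (c : ℕ) (x : ℕ → ℂ) : ℂ := ∑ i ∈ Finset.Icc 1 c, x i * x (N+1-i)

/-- The variety `Z_{P,T}` (affine cone) cut out by quadratic equations `f_c = 0`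
for `c` in a prescribed set `Q` and linear equations `x_c = 0` for `c ∈ 𝓛_{P,T}`. -/
def Zvar (N m : ℕ) (p t : ℕ → ℕ) (Q : ℕ → Prop) (cut : ℕ → Prop) : Set (ℕ → ℂ) :=
  {x | (∀ c, Q c → fquad N c x = 0) ∧ ∀ c, LSet N m p t cut c → x c = 0}

/-!
Only a row `i` with `p_i ≥ t_{i+1}` and `t_{i+1} - 1 ∈ 𝓒_{P,T}` is changed in an essential way:
there `p'_i` is the last column of `[t_i, t_{i+1} - 1]` outside `𝓛_{P,T}`. A column of `𝓛_{P,T}`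
strictly inside a row can only come from a visible cut at its mirror column, so every column of
`[p'_i, t_{i+1} - 1]` is an apparent cut of `D(P,T)`, whence `𝓒_{P',T} = 𝓒_{P,T}`. Shortening row `i`
creates zero columns only in `(p'_i, t_{i+1})`, which already lie in `𝓛_{P,T}`, and a new lone star
at `p'_i` is ruled out or turned into a zero column of `D(P,T)` by the isotropy of `P` and `T`.
So `𝓛_{P',T} = 𝓛_{P,T}`, and `Z_{P,T}`, `Z_{P',T}` are cut out by the same equations.
-/

namespace IsSSym

variable {N m : ℕ} {p : ℕ → ℕ}

theorem le_of_le (hp : IsSSym N m p) {i j : ℕ} (hij : i ≤ j) (hj : j ≤ m + 1) : p i ≤ p j := by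
  rcases hij.eq_or_lt with rfl | h
  · exact le_rfl
  · exact (hp.mono i j h hj).le

theorem lt_succ (hp : IsSSym N m p) {i : ℕ} (hi : i ≤ m) : p i < p (i + 1) :=
  hp.mono i (i + 1) (Nat.lt_succ_self i) (by omega)

theorem one_le (hp : IsSSym N m p) {j : ℕ} (hj1 : 1 ≤ j) (hj : j ≤ m + 1) : 1 ≤ p j := by
  have h := hp.mono 0 j hj1 hj
  rwa [hp.zero] at h

end IsSSym

theorem visCut.mono {m : ℕ} {p q t : ℕ → ℕ} (hqp : ∀ i, q i ≤ p i) {c : ℕ}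
    (h : visCut m p t c) : visCut m q t c := by
  obtain ⟨i, hi, hpi, hc⟩ := h
  exact ⟨i, hi, (hqp i).trans hpi, hc⟩

theorem zeroCol.mono {m : ℕ} {p q t : ℕ → ℕ} (hqp : ∀ i, q i ≤ p i) {c : ℕ}
    (h : zeroCol m p t c) : zeroCol m q t c := by
  obtain ⟨i, hi, hpi, hc⟩ := h
  exact ⟨i, hi, (hqp i).trans_lt hpi, hc⟩

theorem LSet_congr_cut {N m : ℕ} {p t : ℕ → ℕ} {cut cut' : ℕ → Prop} (h : ∀ x, cut x ↔ cut' x)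
    (c : ℕ) : LSet N m p t cut c ↔ LSet N m p t cut' c := by
  simp only [LSet, loneStar, h]

theorem Zvar_congr {N m : ℕ} {p p' t : ℕ → ℕ} {Q Q' cut cut' : ℕ → Prop} (hQ : ∀ c, Q c ↔ Q' c)
    (hL : ∀ c, LSet N m p t cut c ↔ LSet N m p' t cut' c) :
    Zvar N m p t Q cut = Zvar N m p' t Q' cut' := by
  simp only [Zvar, hQ, hL]

section Diagram

variable {N m : ℕ} {p t : ℕ → ℕ}

theorem visCut_zero (hp : IsSSym N m p) (ht : IsSSym N m t) : visCut m p t 0 :=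
  ⟨0, Nat.zero_le _, hp.zero.le, ht.one_le le_rfl (by omega)⟩

theorem appCut_of_appCut_sub (hp : IsSSym N m p) (ht : IsSSym N m t) {c : ℕ}
    (h : appCut N m p t (N - c)) : appCut N m p t c := by
  rcases le_or_gt c N with hc | hc
  · rw [appCut, Nat.sub_sub_self hc] at h
    exact h.symm
  · rw [appCut, Nat.sub_eq_zero_of_le hc.le]
    exact Or.inr (visCut_zero hp ht)

theorem one_le_of_t_succ_le (hp : IsSSym N m p) (ht : IsSSym N m t) {i : ℕ}
    (h : t (i + 1) ≤ p i) : 1 ≤ i := by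
  by_contra! hi
  obtain rfl : i = 0 := by omega
  have := ht.one_le (j := 0 + 1) le_rfl (by omega)
  rw [hp.zero] at h
  omega

theorem eq_of_visCut_pred (hp : IsSSym N m p) (ht : IsSSym N m t) (hle : leS m t p) {w : ℕ}
    (hw1 : 1 ≤ w) (hwm : w ≤ m) (h : visCut m p t (p w - 1)) : t w = p w := by
  obtain ⟨k, hk, hpk, htk⟩ := h
  have hpw := hp.one_le hw1 (by omega)
  have hkw : k < w := by
    by_contra! hwk
    have := hp.le_of_le hwk (by omega)
    omega
  have := ht.le_of_le (show k + 1 ≤ w by omega) (by omega)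
  have := hle w hw1 hwm
  omega

theorem not_visCut_of_mem_row (hp : IsSSym N m p) (ht : IsSSym N m t) {j x : ℕ}
    (hj : j ≤ m) (hx1 : t j ≤ x) (hx2 : x < t (j + 1)) (h3 : t (j + 1) ≤ p j) :
    ¬ visCut m p t x := by
  rintro ⟨k, hk, hpk, htk⟩
  have hjk : j ≤ k := by
    by_contra! hkj
    have := ht.le_of_le (show k + 1 ≤ j by omega) (by omega)
    omega
  have := hp.le_of_le hjk (by omega)
  omega

theorem not_zeroCol_of_mem_row (hp : IsSSym N m p) (ht : IsSSym N m t) {j x : ℕ}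
    (hj : j ≤ m) (hx1 : t j ≤ x) (hx2 : x ≤ p j) : ¬ zeroCol m p t x := by
  rintro ⟨k, hk, hpk, htk⟩
  rcases le_or_gt (k + 1) j with hkj | hjk
  · have := ht.le_of_le hkj (by omega)
    omega
  · have := hp.le_of_le (show j ≤ k by omega) (by omega)
    omega

theorem visCut_mirror_of_LSet (hp : IsSSym N m p) (ht : IsSSym N m t) (hle : leS m t p)
    {j d : ℕ} (hjm : j ≤ m) (hd1 : t j < d) (hd2 : d < t (j + 1)) (h3 : t (j + 1) ≤ p j)
    (hd : LSet N m p t (appCut N m p t) d) : visCut m p t (N + 1 - d) := by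
  obtain ⟨-, hdN, hzero | ⟨w, hw1, hwm, -, -, ⟨he, hcut⟩ | ⟨he, hcut⟩⟩⟩ := hd
  · exact absurd hzero (not_zeroCol_of_mem_row hp ht hjm hd1.le (by omega))
  · rcases hcut with hv | hv
    · exact hv
    · rw [show N - (N + 1 - d) = d - 1 by omega] at hv
      exact absurd hv (not_visCut_of_mem_row hp ht hjm (by omega) (by omega) h3)
  · rcases hcut with hv | hv
    · have htw := eq_of_visCut_pred hp ht hle hw1 hwm (he ▸ hv)
      have := ht.lt_succ hwm
      exact ⟨w, hwm, by omega, by omega⟩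
    · rw [show N - (N + 1 - d - 1) = d by omega] at hv
      exact absurd hv (not_visCut_of_mem_row hp ht hjm hd1.le hd2 h3)

theorem not_LSet_t (hp : IsSSym N m p) (ht : IsSSym N m t) (hle : leS m t p) {i : ℕ}
    (hi1 : 1 ≤ i) (him : i ≤ m) (h3 : t (i + 1) ≤ p i) :
    ¬ LSet N m p t (appCut N m p t) (t i) := by
  rintro ⟨-, hiN, hzero | ⟨w, hw1, hwm, -, -, ⟨he, -⟩ | ⟨he, hcut⟩⟩⟩
  · exact not_zeroCol_of_mem_row hp ht him le_rfl (hle i hi1 him) hzero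
  · exact ht.iso w i hw1 hwm hi1 him (by omega)
  · rcases hcut with hv | hv
    · have htw := eq_of_visCut_pred hp ht hle hw1 hwm (he ▸ hv)
      exact ht.iso w i hw1 hwm hi1 him (by omega)
    · rw [show N - (N + 1 - t i - 1) = t i by omega] at hv
      exact not_visCut_of_mem_row hp ht him le_rfl (ht.lt_succ him) h3 hv

theorem zeroCol_mirror_of_appCut_pred (hp : IsSSym N m p) (ht : IsSSym N m t)
    (hle : leS m t p) {j : ℕ} (hj1 : 1 ≤ j) (hjm : j ≤ m) (h3 : t (j + 1) ≤ p j)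
    (hcut : appCut N m p t (p j - 1)) : zeroCol m p t (N + 1 - p j) := by
  have := ht.lt_succ hjm
  have hpjN := hp.ub j hj1 hjm
  rcases hcut with hv | hv
  · have := eq_of_visCut_pred hp ht hle hj1 hjm hv
    omega
  rw [show N - (p j - 1) = N + 1 - p j by omega] at hv
  obtain ⟨k, hk, hpk, htk⟩ := hv
  refine ⟨k, hk, lt_of_le_of_ne hpk fun heq => ?_, htk⟩
  rcases Nat.eq_zero_or_pos k with rfl | hk1
  · rw [hp.zero] at heq
    omega
  · exact hp.iso k j hk1 hk hj1 hjm (by omega)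


theorem Pp_eq_self {i : ℕ} (h : p i < t (i + 1)) : Pp N m p t i = p i := by
  rw [Pp, if_pos h]

theorem Pp_eq_t_succ {i : ℕ} (h3 : t (i + 1) ≤ p i) (hwin : ¬ appCut N m p t (t (i + 1) - 1)) :
    Pp N m p t i = t (i + 1) := by
  rw [Pp, if_neg (by omega), if_pos hwin]

theorem Pp_eq_sup {i : ℕ} (h3 : t (i + 1) ≤ p i) (hwin : appCut N m p t (t (i + 1) - 1)) :
    Pp N m p t i = ((Finset.Icc (t i) (t (i + 1) - 1)).filter
      (fun c => ¬ LSet N m p t (appCut N m p t) c)).sup id := by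
  rw [Pp, if_neg (by omega), if_neg (not_not_intro hwin)]

theorem Pp_le (i : ℕ) : Pp N m p t i ≤ p i := by
  by_cases h1 : p i < t (i + 1)
  · exact (Pp_eq_self h1).le
  by_cases hwin : appCut N m p t (t (i + 1) - 1)
  · rw [Pp_eq_sup (by omega) hwin]
    refine Finset.sup_le fun b hb => ?_
    rw [Finset.mem_filter, Finset.mem_Icc] at hb
    exact hb.1.2.trans (by omega)
  · rw [Pp_eq_t_succ (by omega) hwin]
    omega

theorem Pp_mem_of_appCut (hp : IsSSym N m p) (ht : IsSSym N m t) (hle : leS m t p) {i : ℕ}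
    (him : i ≤ m) (h3 : t (i + 1) ≤ p i) (hwin : appCut N m p t (t (i + 1) - 1)) :
    t i ≤ Pp N m p t i ∧ Pp N m p t i < t (i + 1) ∧
      ¬ LSet N m p t (appCut N m p t) (Pp N m p t i) := by
  have hti := ht.lt_succ him
  set S := (Finset.Icc (t i) (t (i + 1) - 1)).filter
    (fun c => ¬ LSet N m p t (appCut N m p t) c)
  have hS : t i ∈ S := Finset.mem_filter.2 ⟨Finset.mem_Icc.2 ⟨le_rfl, by omega⟩,
    not_LSet_t hp ht hle (one_le_of_t_succ_le hp ht h3) him h3⟩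
  obtain ⟨b, hb, hsup⟩ := Finset.exists_mem_eq_sup S ⟨t i, hS⟩ id
  rw [Finset.mem_filter, Finset.mem_Icc] at hb
  rw [Pp_eq_sup h3 hwin, hsup, id]
  exact ⟨hb.1.1, by omega, hb.2⟩

theorem le_Pp (hp : IsSSym N m p) (ht : IsSSym N m t) (hle : leS m t p) {i : ℕ}
    (hi1 : 1 ≤ i) (him : i ≤ m) : t i ≤ Pp N m p t i := by
  by_cases h1 : p i < t (i + 1)
  · rw [Pp_eq_self h1]
    exact hle i hi1 him
  by_cases hwin : appCut N m p t (t (i + 1) - 1)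
  · exact (Pp_mem_of_appCut hp ht hle him (by omega) hwin).1
  · rw [Pp_eq_t_succ (by omega) hwin]
    exact (ht.lt_succ him).le

theorem LSet_of_Pp_lt (hp : IsSSym N m p) (ht : IsSSym N m t) (hle : leS m t p) {i d : ℕ}
    (him : i ≤ m) (h3 : t (i + 1) ≤ p i) (hwin : appCut N m p t (t (i + 1) - 1))
    (hd1 : Pp N m p t i < d) (hd2 : d < t (i + 1)) : LSet N m p t (appCut N m p t) d := by
  have hti := (Pp_mem_of_appCut hp ht hle him h3 hwin).1
  by_contra hd
  have hdS : d ∈ (Finset.Icc (t i) (t (i + 1) - 1)).filter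
      (fun c => ¬ LSet N m p t (appCut N m p t) c) :=
    Finset.mem_filter.2 ⟨Finset.mem_Icc.2 ⟨by omega, by omega⟩, hd⟩
  have := Finset.le_sup (f := id) hdS
  rw [← Pp_eq_sup h3 hwin] at this
  exact absurd this (by simpa using hd1)

theorem appCut_of_Pp_le (hp : IsSSym N m p) (ht : IsSSym N m t) (hle : leS m t p) {i x : ℕ}
    (him : i ≤ m) (h3 : t (i + 1) ≤ p i) (hwin : appCut N m p t (t (i + 1) - 1))
    (hx1 : Pp N m p t i ≤ x) (hx2 : x < t (i + 1)) : appCut N m p t x := by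
  rcases (show x ≤ t (i + 1) - 1 by omega).eq_or_lt with rfl | hx
  · exact hwin
  have hti := (Pp_mem_of_appCut hp ht hle him h3 hwin).1
  have hL := LSet_of_Pp_lt hp ht hle him h3 hwin (d := x + 1) (by omega) (by omega)
  have hv := visCut_mirror_of_LSet hp ht hle him (by omega) (by omega) h3 hL
  rw [show N + 1 - (x + 1) = N - x by omega] at hv
  exact Or.inr hv

theorem appCut_of_visCut_Pp (hp : IsSSym N m p) (ht : IsSSym N m t) (hle : leS m t p) {x : ℕ}
    (h : visCut m (Pp N m p t) t x) : appCut N m p t x := by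
  obtain ⟨i, him, hpi, hti⟩ := h
  by_cases h1 : p i < t (i + 1)
  · rw [Pp_eq_self h1] at hpi
    exact Or.inl ⟨i, him, hpi, hti⟩
  by_cases hwin : appCut N m p t (t (i + 1) - 1)
  · exact appCut_of_Pp_le hp ht hle him (by omega) hwin hpi hti
  · rw [Pp_eq_t_succ (by omega) hwin] at hpi
    omega

theorem appCut_Pp_iff (hp : IsSSym N m p) (ht : IsSSym N m t) (hle : leS m t p) (c : ℕ) :
    appCut N m (Pp N m p t) t c ↔ appCut N m p t c := by
  constructor
  · rintro (h | h)
    · exact appCut_of_visCut_Pp hp ht hle h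
    · exact appCut_of_appCut_sub hp ht (appCut_of_visCut_Pp hp ht hle h)
  · exact Or.imp (visCut.mono Pp_le) (visCut.mono Pp_le)


theorem LSet_of_zeroCol_Pp (hp : IsSSym N m p) (ht : IsSSym N m t) (hle : leS m t p) {c : ℕ}
    (hc1 : 1 ≤ c) (hcN : c ≤ N) (h : zeroCol m (Pp N m p t) t c) :
    LSet N m p t (appCut N m p t) c := by
  obtain ⟨k, hk, hpk, htk⟩ := h
  by_cases hpc : p k < c
  · exact ⟨hc1, hcN, Or.inl ⟨k, hk, hpc, htk⟩⟩
  have h3 : t (k + 1) ≤ p k := by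
    by_contra! h1
    rw [Pp_eq_self h1] at hpk
    omega
  by_cases hwin : appCut N m p t (t (k + 1) - 1)
  · exact LSet_of_Pp_lt hp ht hle hk h3 hwin hpk htk
  · rw [Pp_eq_t_succ h3 hwin] at hpk
    omega

-- Handles the lone stars of `D(P',T)` at the end `p'_j` of a shortened row, the only ones that
-- are not lone stars of `D(P,T)`.
theorem zeroCol_mirror_Pp (hp : IsSSym N m p) (ht : IsSSym N m t) (hle : leS m t p) {j : ℕ}
    (hjm : j ≤ m) (h3 : t (j + 1) ≤ p j) (hwin : appCut N m p t (t (j + 1) - 1))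
    (hcut : appCut N m p t (Pp N m p t j - 1)) : zeroCol m p t (N + 1 - Pp N m p t j) := by
  have hj1 := one_le_of_t_succ_le hp ht h3
  obtain ⟨hte, het, hnotL⟩ := Pp_mem_of_appCut hp ht hle hjm h3 hwin
  have hmirror := appCut_of_Pp_le hp ht hle hjm h3 hwin le_rfl het
  set e := Pp N m p t j
  have hpjN := hp.ub j hj1 hjm
  have htj1 := ht.one_le hj1 (by omega)
  replace hmirror : visCut m p t (N - e) :=
    hmirror.resolve_left (not_visCut_of_mem_row hp ht hjm hte het h3)
  rcases hte.eq_or_lt with hte | hte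
  · obtain ⟨k, hk, hpk, htk⟩ := hmirror
    refine ⟨k, hk, by omega, ?_⟩
    by_contra! hge
    -- otherwise `t_{k+1} + t_j = N + 1`
    rcases hk.eq_or_lt with rfl | hkm
    · rw [ht.top] at hge
      omega
    · exact ht.iso (k + 1) j (by omega) hkm hj1 hjm (by omega)
  · have hv := hcut.resolve_left (not_visCut_of_mem_row hp ht hjm (by omega) (by omega) h3)
    rw [show N - (e - 1) = N + 1 - e by omega] at hv
    obtain ⟨k, hk, hpk, htk⟩ := hv
    refine ⟨k, hk, lt_of_le_of_ne hpk fun hpe => hnotL ?_, htk⟩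
    -- otherwise `(k, p_k)` is a lone star in column `N + 1 - e`, putting `e` in `𝓛_{P,T}`
    have hk1 : 1 ≤ k := by
      rcases Nat.eq_zero_or_pos k with rfl | hk1
      · rw [hp.zero] at hpe
        omega
      · exact hk1
    refine ⟨by omega, by omega, Or.inr ⟨k, hk1, hk, ?_, by omega, Or.inr ⟨by omega, ?_⟩⟩⟩
    · exact (hle k hk1 hk).trans (by omega)
    · rw [show N + 1 - e - 1 = N - e by omega]
      exact Or.inl hmirror

theorem LSet_Pp_of_LSet (hp : IsSSym N m p) (ht : IsSSym N m t) (hle : leS m t p) {c : ℕ}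
    (h : LSet N m p t (appCut N m p t) c) : LSet N m (Pp N m p t) t (appCut N m p t) c := by
  obtain ⟨hc1, hcN, hzero | ⟨j, hj1, hjm, htj, hjp, ⟨he, hcut⟩ | ⟨he, hcut⟩⟩⟩ := h
  · exact ⟨hc1, hcN, Or.inl (hzero.mono Pp_le)⟩
  · exact ⟨hc1, hcN, Or.inr ⟨j, hj1, hjm, htj, he ▸ le_Pp hp ht hle hj1 hjm, Or.inl ⟨he, hcut⟩⟩⟩
  by_cases h1 : p j < t (j + 1)
  · rw [← Pp_eq_self h1] at hjp he
    exact ⟨hc1, hcN, Or.inr ⟨j, hj1, hjm, htj, hjp, Or.inr ⟨he, hcut⟩⟩⟩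
  · have hzero := zeroCol_mirror_of_appCut_pred hp ht hle hj1 hjm (by omega) (he ▸ hcut)
    rw [← he, show N + 1 - (N + 1 - c) = c by omega] at hzero
    exact ⟨hc1, hcN, Or.inl (hzero.mono Pp_le)⟩

theorem LSet_of_LSet_Pp (hp : IsSSym N m p) (ht : IsSSym N m t) (hle : leS m t p) {c : ℕ}
    (h : LSet N m (Pp N m p t) t (appCut N m p t) c) : LSet N m p t (appCut N m p t) c := by
  obtain ⟨hc1, hcN, hzero | ⟨j, hj1, hjm, htj, hjp, ⟨he, hcut⟩ | ⟨he, hcut⟩⟩⟩ := h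
  · exact LSet_of_zeroCol_Pp hp ht hle hc1 hcN hzero
  · exact ⟨hc1, hcN, Or.inr ⟨j, hj1, hjm, htj, hjp.trans (Pp_le j), Or.inl ⟨he, hcut⟩⟩⟩
  by_cases h1 : p j < t (j + 1)
  · rw [Pp_eq_self h1] at hjp he
    exact ⟨hc1, hcN, Or.inr ⟨j, hj1, hjm, htj, hjp, Or.inr ⟨he, hcut⟩⟩⟩
  by_cases hwin : appCut N m p t (t (j + 1) - 1)
  · have hzero := zeroCol_mirror_Pp hp ht hle hjm (by omega) hwin (he ▸ hcut)
    rw [← he, show N + 1 - (N + 1 - c) = c by omega] at hzero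
    exact ⟨hc1, hcN, Or.inl hzero⟩
  · rw [Pp_eq_t_succ (by omega) hwin] at he
    exact absurd (he ▸ hcut) hwin

theorem LSet_Pp_iff (hp : IsSSym N m p) (ht : IsSSym N m t) (hle : leS m t p) (c : ℕ) :
    LSet N m p t (appCut N m p t) c ↔
      LSet N m (Pp N m p t) t (appCut N m (Pp N m p t) t) c :=
  (Iff.intro (LSet_Pp_of_LSet hp ht hle) (LSet_of_LSet_Pp hp ht hle)).trans
    (LSet_congr_cut (fun x => (appCut_Pp_iff hp ht hle x).symm) c)

end Diagram

/-- (types B/C) `𝓛_{P,T} = 𝓛_{P',T}`; consequently `Z_{P,T} = Z_{P',T}`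
(the two varieties are defined by the same linear and quadratic equations).
Stated for type C (`N = 2n`, `𝓠 = [0,n] ∩ 𝓒`) and type B (`N = 2n+1`,
`𝓠 = ([0,n] ∩ 𝓒) ∪ {n+1}`). -/
theorem stmt_12 :
    -- type C
    (∀ n m : ℕ, ∀ p t : ℕ → ℕ, IsSSym (2*n) m p → IsSSym (2*n) m t → leS m t p →
      ((∀ c, LSet (2*n) m p t (appCut (2*n) m p t) c ↔
             LSet (2*n) m (Pp (2*n) m p t) t (appCut (2*n) m (Pp (2*n) m p t) t) c) ∧
       Zvar (2*n) m p t (fun c => c ≤ n ∧ appCut (2*n) m p t c)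
           (appCut (2*n) m p t)
         = Zvar (2*n) m (Pp (2*n) m p t) t
             (fun c => c ≤ n ∧ appCut (2*n) m (Pp (2*n) m p t) t c)
             (appCut (2*n) m (Pp (2*n) m p t) t))) ∧
    -- type B
    (∀ n m : ℕ, ∀ p t : ℕ → ℕ, IsSSym (2*n+1) m p → IsSSym (2*n+1) m t → leS m t p →
      ((∀ c, LSet (2*n+1) m p t (appCut (2*n+1) m p t) c ↔
             LSet (2*n+1) m (Pp (2*n+1) m p t) t (appCut (2*n+1) m (Pp (2*n+1) m p t) t) c) ∧
       Zvar (2*n+1) m p t (fun c => (c ≤ n ∧ appCut (2*n+1) m p t c) ∨ c = n+1)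
           (appCut (2*n+1) m p t)
         = Zvar (2*n+1) m (Pp (2*n+1) m p t) t
             (fun c => (c ≤ n ∧ appCut (2*n+1) m (Pp (2*n+1) m p t) t c) ∨ c = n+1)
             (appCut (2*n+1) m (Pp (2*n+1) m p t) t))) := by
  refine ⟨fun n m p t hp ht hle => ⟨LSet_Pp_iff hp ht hle, ?_⟩,
    fun n m p t hp ht hle => ⟨LSet_Pp_iff hp ht hle, ?_⟩⟩
  · refine Zvar_congr (fun c => ?_) (LSet_Pp_iff hp ht hle)
    rw [appCut_Pp_iff hp ht hle]
  · refine Zvar_congr (fun c => ?_) (LSet_Pp_iff hp ht hle)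
    rw [appCut_Pp_iff hp ht hle]
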